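/- arXiv:2304.12093 — 4 statements merged into one kernel-verified Lean document; each statement's English description precedes it below -/
import Mathlib

section
/- Wasserstein contraction under surjective linear maps (forward direction of Proposition 1): Let D be a real d×m matrix with full row rank (rank D = d, so DDᵀ is invertible), and let μ, ν be Borel probability measures on ℝ^m. Define the cost c'(x,y) := ‖Dᵀ(DDᵀ)⁻¹(x − y)‖₂ on ℝ^d × ℝ^d. Then W_{c'}(D#μ, D#ν) ≤ W_c(μ, ν), where c(x,y) = ‖x − y‖₂, both sides valued in [0,∞], and D#μ denotes the pushforward of μ under x ↦ Dx. In particular, if W_c(μ, ν) ≤ ε then W_{c'}(D#μ, D#ν) ≤ ε. -/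
open MeasureTheory Matrix ENNReal

/-- Euclidean norm on `Fin k → ℝ`. -/
noncomputable def e2 {k : ℕ} (x : Fin k → ℝ) : ℝ := Real.sqrt (∑ i, (x i) ^ 2)

/-- Optimal transport cost between two Borel probability measures, for a cost
function `c`, valued in `[0,∞]`: infimum over all couplings of the integral of the cost. -/
noncomputable def Wc {E F : Type*} [MeasurableSpace E] [MeasurableSpace F]
    (c : E → F → ℝ) (μ : Measure E) (ν : Measure F) : ℝ≥0∞ :=
  ⨅ π ∈ {π : Measure (E × F) |
      IsProbabilityMeasure π ∧ π.map Prod.fst = μ ∧ π.map Prod.snd = ν},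
    ∫⁻ p, ENNReal.ofReal (c p.1 p.2) ∂π

lemma e2_continuous {k : ℕ} : Continuous (e2 (k := k)) := by
  unfold e2
  exact Real.continuous_sqrt.comp
    (continuous_finset_sum _ fun i _ => (continuous_apply i).pow 2)

lemma e2_eq_norm {k : ℕ} (x : Fin k → ℝ) :
    e2 x = ‖(show EuclideanSpace ℝ (Fin k) from WithLp.toLp 2 fun i => x i)‖ := by
  rw [EuclideanSpace.norm_eq]
  simp [e2, Real.norm_eq_abs, sq_abs]

-- key contraction lemma
lemma key_contraction {d m : ℕ} (D : Matrix (Fin d) (Fin m) ℝ)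
    (hA : IsUnit (D * Dᵀ)) (v : Fin m → ℝ) :
    e2 ((Dᵀ * (D * Dᵀ)⁻¹).mulVec (D.mulVec v)) ≤ e2 v := by
  have hdet : IsUnit (D * Dᵀ).det := (Matrix.isUnit_iff_isUnit_det _).mp hA
  set A := D * Dᵀ with hAdef
  set P := Dᵀ * A⁻¹ * D with hP
  have hAsymm : Aᵀ = A := by rw [hAdef, Matrix.transpose_mul, Matrix.transpose_transpose]
  have hPsymm : Pᵀ = P := by
    rw [hP, Matrix.transpose_mul, Matrix.transpose_mul, Matrix.transpose_transpose,
      Matrix.transpose_nonsing_inv, hAsymm, Matrix.mul_assoc]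
  have hPP : Pᵀ * P = P := by
    rw [hPsymm, hP]
    calc (Dᵀ * A⁻¹ * D) * (Dᵀ * A⁻¹ * D)
        = Dᵀ * (A⁻¹ * ((D * Dᵀ) * (A⁻¹ * D))) := by
          simp only [Matrix.mul_assoc]
      _ = Dᵀ * (A⁻¹ * (A * (A⁻¹ * D))) := by rw [← hAdef]
      _ = Dᵀ * ((A⁻¹ * A) * (A⁻¹ * D)) := by simp only [Matrix.mul_assoc]
      _ = Dᵀ * A⁻¹ * D := by
          rw [Matrix.nonsing_inv_mul _ hdet, Matrix.one_mul, Matrix.mul_assoc]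
  have hvec : (Dᵀ * A⁻¹).mulVec (D.mulVec v) = P.mulVec v := by
    rw [Matrix.mulVec_mulVec, hP]
  rw [hvec]
  set w := P.mulVec v with hw
  have hww : w ⬝ᵥ w = w ⬝ᵥ v := by
    calc w ⬝ᵥ P.mulVec v = Matrix.vecMul w P ⬝ᵥ v := Matrix.dotProduct_mulVec _ _ _
      _ = Pᵀ.mulVec w ⬝ᵥ v := by rw [Matrix.mulVec_transpose]
      _ = (Pᵀ * P).mulVec v ⬝ᵥ v := by rw [hw, Matrix.mulVec_mulVec]
      _ = w ⬝ᵥ v := by rw [hPP]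
  -- transfer to EuclideanSpace
  set F : (Fin m → ℝ) → EuclideanSpace ℝ (Fin m) := fun x => WithLp.toLp 2 fun i => x i with hF
  have hinner : ∀ a b : Fin m → ℝ, (inner ℝ (F a) (F b) : ℝ) = a ⬝ᵥ b := by
    intro a b
    simp [hF, PiLp.inner_apply, dotProduct, mul_comm]
  have h1 : ‖F w‖ ^ 2 = (inner ℝ (F w) (F v) : ℝ) := by
    rw [← real_inner_self_eq_norm_sq, hinner, hinner, hww]
  have h2 : (inner ℝ (F w) (F v) : ℝ) ≤ ‖F w‖ * ‖F v‖ := real_inner_le_norm _ _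
  have h3 : ‖F w‖ ≤ ‖F v‖ := by nlinarith [norm_nonneg (F w), norm_nonneg (F v)]
  rw [e2_eq_norm w, e2_eq_norm v]
  exact h3

lemma isUnit_of_rank {d m : ℕ} (D : Matrix (Fin d) (Fin m) ℝ) (hD : D.rank = d) :
    IsUnit (D * Dᵀ) := by
  classical
  have hr : (D * Dᵀ).rank = d := by rw [Matrix.rank_self_mul_transpose, hD]
  rw [← Matrix.mulVec_surjective_iff_isUnit]
  have htop : LinearMap.range (D * Dᵀ).mulVecLin = ⊤ := by
    apply Submodule.eq_top_of_finrank_eq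
    rw [← Matrix.rank, hr]
    simp [Module.finrank_pi]
  intro y
  have : y ∈ LinearMap.range (D * Dᵀ).mulVecLin := htop ▸ Submodule.mem_top
  obtain ⟨x, hx⟩ := this
  exact ⟨x, hx⟩


/-- Wasserstein contraction under surjective linear maps (forward direction of
Proposition 1). -/
theorem wasserstein_contraction_surjective_linear
    (d m : ℕ) (D : Matrix (Fin d) (Fin m) ℝ) (hD : D.rank = d)
    (μ ν : Measure (Fin m → ℝ))
    (hμ : IsProbabilityMeasure μ) (hν : IsProbabilityMeasure ν) :
    Wc (fun x y => e2 ((Dᵀ * (D * Dᵀ)⁻¹).mulVec (x - y)))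
        (μ.map fun x => D.mulVec x) (ν.map fun x => D.mulVec x)
      ≤ Wc (fun x y => e2 (x - y)) μ ν ∧
    ∀ ε : ℝ≥0∞, Wc (fun x y => e2 (x - y)) μ ν ≤ ε →
      Wc (fun x y => e2 ((Dᵀ * (D * Dᵀ)⁻¹).mulVec (x - y)))
        (μ.map fun x => D.mulVec x) (ν.map fun x => D.mulVec x) ≤ ε := by
  have hA := isUnit_of_rank D hD
  have hDcont : Continuous (D.mulVec) := D.mulVecLin.continuous_of_finiteDimensional
  have hMcont : Continuous ((Dᵀ * (D * Dᵀ)⁻¹).mulVec) :=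
    (Dᵀ * (D * Dᵀ)⁻¹).mulVecLin.continuous_of_finiteDimensional
  have hDmeas : Measurable (D.mulVec) := hDcont.measurable
  have hfmeas : Measurable fun p : (Fin d → ℝ) × (Fin d → ℝ) =>
      ENNReal.ofReal (e2 ((Dᵀ * (D * Dᵀ)⁻¹).mulVec (p.1 - p.2))) := by
    apply ENNReal.measurable_ofReal.comp
    exact (e2_continuous.comp (hMcont.comp (continuous_fst.sub continuous_snd))).measurable
  have main : Wc (fun x y => e2 ((Dᵀ * (D * Dᵀ)⁻¹).mulVec (x - y)))
        (μ.map fun x => D.mulVec x) (ν.map fun x => D.mulVec x)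
      ≤ Wc (fun x y => e2 (x - y)) μ ν := by
    rw [Wc]
    refine le_iInf₂ fun π hπ => ?_
    obtain ⟨hπ1, hπf, hπs⟩ := hπ
    set g : (Fin m → ℝ) × (Fin m → ℝ) → (Fin d → ℝ) × (Fin d → ℝ) :=
      Prod.map D.mulVec D.mulVec with hg
    have hgmeas : Measurable g := Measurable.prodMap hDmeas hDmeas
    have hmem : π.map g ∈ {π' : Measure ((Fin d → ℝ) × (Fin d → ℝ)) |
        IsProbabilityMeasure π' ∧ π'.map Prod.fst = μ.map (fun x => D.mulVec x) ∧
          π'.map Prod.snd = ν.map (fun x => D.mulVec x)} := by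
      refine ⟨Measure.isProbabilityMeasure_map hgmeas.aemeasurable, ?_, ?_⟩
      · rw [Measure.map_map measurable_fst hgmeas, ← hπf,
          Measure.map_map hDmeas measurable_fst]
        rfl
      · rw [Measure.map_map measurable_snd hgmeas, ← hπs,
          Measure.map_map hDmeas measurable_snd]
        rfl
    calc Wc (fun x y => e2 ((Dᵀ * (D * Dᵀ)⁻¹).mulVec (x - y)))
          (μ.map fun x => D.mulVec x) (ν.map fun x => D.mulVec x)
        ≤ ∫⁻ p, ENNReal.ofReal (e2 ((Dᵀ * (D * Dᵀ)⁻¹).mulVec (p.1 - p.2))) ∂(π.map g) := by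
          rw [Wc]; exact iInf₂_le (π.map g) hmem
      _ = ∫⁻ p, ENNReal.ofReal
            (e2 ((Dᵀ * (D * Dᵀ)⁻¹).mulVec ((g p).1 - (g p).2))) ∂π :=
          lintegral_map hfmeas hgmeas
      _ ≤ ∫⁻ p, ENNReal.ofReal (e2 (p.1 - p.2)) ∂π := by
          refine lintegral_mono fun p => ENNReal.ofReal_le_ofReal ?_
          have : (g p).1 - (g p).2 = D.mulVec (p.1 - p.2) := by
            simp [hg, Matrix.mulVec_sub]
          rw [this]
          exact key_contraction D hA (p.1 - p.2)
  exact ⟨main, fun ε hε => main.trans hε⟩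
end

section
/- Recursive feasibility of the Wasserstein Tube MPC (Proposition 3, set-theoretic form): Let N ≥ 1 be an integer, let A ∈ ℝ^{d×d}, B ∈ ℝ^{d×m}, K ∈ ℝ^{m×d}, and A_K := A + BK. Let W ⊆ ℝ^d and U ⊆ ℝ^m be sets. Define the error sets E_0 := {0} and E_{k+1} := A_K''E_k ⊕ W for k ≥ 0, where A_K''E denotes the image of E under x ↦ A_K x. Let Γ_1,…,Γ_N ⊆ ℝ^d be arbitrary sets and define the tightened sets Z_k := ∩_{p=1}^k ( Γ_p ⊖ (⊕_{r=p}^{k−1} A_K^r''W) ) for k ∈ {1,…,N}, where the Minkowski sum over an empty index range is {0}. Let Z_f ⊆ ℝ^d satisfy: (i) K''Z_f ⊆ U ⊖ K''E_N; (ii) A_K''Z_f ⊕ A_K^N''W ⊆ Z_f; (iii) Z_f ⊆ Z_N. Given x ∈ ℝ^d and c_0,…,c_{N−1} ∈ ℝ^m, say that (c_0,…,c_{N−1}) is feasible from x if, defining z_0 := x, v_k := K z_k + c_k, and z_{k+1} := A z_k + B v_k for k ∈ {0,…,N−1}, one has: v_k ∈ U ⊖ K''E_k for all k ∈ {0,…,N−1};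 z_k ∈ Z_k for all k ∈ {1,…,N−1}; and z_N ∈ Z_f. Then: if (c_0,…,c_{N−1}) is feasible from x, then for every w ∈ W the shifted sequence (c_1,…,c_{N−1}, 0) is feasible from z_1 + w. -/
open Matrix Pointwise

/-- Pontryagin difference of two sets: `U ⊖ S = {x | ∀ s ∈ S, x + s ∈ U}`. -/
def pDiff {G : Type*} [Add G] (U S : Set G) : Set G := {x | ∀ s ∈ S, x + s ∈ U}

/-- Recursive feasibility of the Wasserstein Tube MPC (Proposition 3, set-theoretic
form): if the control sequence `c_0, …, c_{N-1}` is feasible from `x`, then for every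
`w ∈ W` the shifted sequence `(c_1, …, c_{N-1}, 0)` is feasible from `z_1 + w`. -/
theorem wtmpc_recursive_feasibility
    (d m N : ℕ) (hN : 1 ≤ N)
    (A : Matrix (Fin d) (Fin d) ℝ) (B : Matrix (Fin d) (Fin m) ℝ)
    (K : Matrix (Fin m) (Fin d) ℝ)
    (W : Set (Fin d → ℝ)) (U : Set (Fin m → ℝ))
    (E : ℕ → Set (Fin d → ℝ))
    (hE0 : E 0 = {0})
    (hEs : ∀ k, E (k + 1) = ((A + B * K).mulVec '' E k) + W)
    (Γ : ℕ → Set (Fin d → ℝ)) (Z : ℕ → Set (Fin d → ℝ))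
    (hZ : ∀ k, 1 ≤ k → k ≤ N → Z k = ⋂ p ∈ Finset.Icc 1 k,
        pDiff (Γ p) (∑ r ∈ Finset.Ico p k, ((A + B * K) ^ r).mulVec '' W))
    (Zf : Set (Fin d → ℝ))
    (hZf1 : K.mulVec '' Zf ⊆ pDiff U (K.mulVec '' E N))
    (hZf2 : ((A + B * K).mulVec '' Zf) + (((A + B * K) ^ N).mulVec '' W) ⊆ Zf)
    (hZf3 : Zf ⊆ Z N)
    (x : Fin d → ℝ) (c : ℕ → Fin m → ℝ)
    (z : ℕ → Fin d → ℝ)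
    (hz0 : z 0 = x)
    (hzs : ∀ k, z (k + 1) = A.mulVec (z k) + B.mulVec (K.mulVec (z k) + c k))
    (hfeas_u : ∀ k < N, K.mulVec (z k) + c k ∈ pDiff U (K.mulVec '' E k))
    (hfeas_z : ∀ k, 1 ≤ k → k ≤ N - 1 → z k ∈ Z k)
    (hfeas_f : z N ∈ Zf)
    (w : Fin d → ℝ) (hw : w ∈ W) :
    ∃ z' : ℕ → Fin d → ℝ,
      z' 0 = z 1 + w ∧
      (∀ k, z' (k + 1) = A.mulVec (z' k) +
          B.mulVec (K.mulVec (z' k) + (if k + 1 < N then c (k + 1) else 0))) ∧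
      (∀ k < N, K.mulVec (z' k) + (if k + 1 < N then c (k + 1) else 0)
          ∈ pDiff U (K.mulVec '' E k)) ∧
      (∀ k, 1 ≤ k → k ≤ N - 1 → z' k ∈ Z k) ∧
      z' N ∈ Zf := by
  obtain ⟨n, rfl⟩ : ∃ n, N = n + 1 := ⟨N - 1, by omega⟩
  set AK := A + B * K with hAK
  -- dynamics helper
  have dyn : ∀ (v : Fin d → ℝ) (u : Fin m → ℝ),
      A.mulVec v + B.mulVec (K.mulVec v + u) = AK.mulVec v + B.mulVec u := by
    intro v u
    rw [hAK, Matrix.add_mulVec, Matrix.mulVec_add, ← Matrix.mulVec_mulVec]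
    abel
  -- error set shift lemma
  have hEw : ∀ k, ∀ e ∈ E k, e + (AK ^ k).mulVec w ∈ E (k + 1) := by
    intro k
    induction k with
    | zero =>
      intro e he
      rw [hE0] at he
      simp only [Set.mem_singleton_iff] at he
      subst he
      rw [hEs, hE0]
      have h0 : (0 : Fin d → ℝ) + (AK ^ 0).mulVec w = AK.mulVec 0 + w := by
        simp [Matrix.one_mulVec]
      rw [h0]
      exact Set.add_mem_add ⟨0, rfl, rfl⟩ hw
    | succ k ih =>
      intro e he
      rw [hEs] at he
      rw [Set.mem_add] at he
      obtain ⟨a, ⟨e', he', rfl⟩, w', hw', rfl⟩ := he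
      rw [hEs]
      have key : (AK.mulVec e' + w') + (AK ^ (k + 1)).mulVec w
          = AK.mulVec (e' + (AK ^ k).mulVec w) + w' := by
        rw [Matrix.mulVec_add, Matrix.mulVec_mulVec, ← pow_succ']
        abel
      rw [key]
      exact Set.add_mem_add ⟨_, ih e' he', rfl⟩ hw'
  -- tightened set shift lemma
  have hZw : ∀ k, 1 ≤ k → k + 1 ≤ n + 1 → ∀ v ∈ Z (k + 1),
      v + (AK ^ k).mulVec w ∈ Z k := by
    intro k hk1 hkN v hv
    rw [hZ k hk1 (by omega)]
    rw [hZ (k + 1) (by omega) hkN] at hv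
    simp only [Set.mem_iInter] at hv ⊢
    intro p hp
    simp only [Finset.mem_Icc] at hp
    have hvp := hv p (by simp only [Finset.mem_Icc]; omega)
    intro s hs
    have hsum : (∑ r ∈ Finset.Ico p (k + 1), ((AK) ^ r).mulVec '' W)
        = (∑ r ∈ Finset.Ico p k, ((AK) ^ r).mulVec '' W) + (AK ^ k).mulVec '' W := by
      rw [Finset.sum_Ico_succ_top (by omega)]
    have hmem : s + (AK ^ k).mulVec w
        ∈ ∑ r ∈ Finset.Ico p (k + 1), ((AK) ^ r).mulVec '' W := by
      rw [hsum]; exact Set.add_mem_add hs ⟨w, hw, rfl⟩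
    have hres := hvp _ hmem
    have heq : v + (AK ^ k).mulVec w + s = v + (s + (AK ^ k).mulVec w) := by abel
    rw [heq]; exact hres
  -- define the shifted trajectory
  set z' : ℕ → Fin d → ℝ := fun k => Nat.rec (z 1 + w)
    (fun k zk => A.mulVec zk + B.mulVec (K.mulVec zk +
      (if k + 1 < n + 1 then c (k + 1) else 0))) k with hz'
  have hrec : ∀ k, z' (k + 1) = A.mulVec (z' k) +
      B.mulVec (K.mulVec (z' k) + (if k + 1 < n + 1 then c (k + 1) else 0)) :=
    fun k => rfl
  -- explicit formula up to time n
  have hform : ∀ k, k + 1 ≤ n + 1 → z' k = z (k + 1) + (AK ^ k).mulVec w := by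
    intro k
    induction k with
    | zero => intro _; simp [hz', Matrix.one_mulVec]
    | succ k ih =>
      intro hk
      have hk' : k + 1 < n + 1 := by omega
      have ihk := ih (by omega)
      rw [hrec, if_pos hk', ihk, dyn, hzs (k + 1), dyn, Matrix.mulVec_add,
        Matrix.mulVec_mulVec, ← pow_succ']
      abel
  refine ⟨z', rfl, hrec, ?_, ?_, ?_⟩
  · -- input constraints
    intro k hk
    by_cases hcase : k + 1 < n + 1
    · rw [if_pos hcase]
      intro a ha
      obtain ⟨e, he, rfl⟩ := ha
      have h1 := hfeas_u (k + 1) hcase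
      have h2 : K.mulVec (e + (AK ^ k).mulVec w) ∈ K.mulVec '' E (k + 1) :=
        ⟨_, hEw k e he, rfl⟩
      have h3 := h1 _ h2
      have heq : K.mulVec (z' k) + c (k + 1) + K.mulVec e
          = K.mulVec (z (k + 1)) + c (k + 1) + K.mulVec (e + (AK ^ k).mulVec w) := by
        rw [hform k (by omega), Matrix.mulVec_add, Matrix.mulVec_add]
        abel
      rw [heq]; exact h3
    · have hkn : k = n := by omega
      subst hkn
      rw [if_neg hcase]
      intro a ha
      obtain ⟨e, he, rfl⟩ := ha
      have h1 : K.mulVec (z (k + 1)) ∈ pDiff U (K.mulVec '' E (k + 1)) :=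
        hZf1 ⟨z (k + 1), hfeas_f, rfl⟩
      have h3 := h1 _ ⟨_, hEw k e he, rfl⟩
      have heq : K.mulVec (z' k) + 0 + K.mulVec e
          = K.mulVec (z (k + 1)) + K.mulVec (e + (AK ^ k).mulVec w) := by
        rw [hform k (by omega), Matrix.mulVec_add, Matrix.mulVec_add]
        abel
      rw [heq]; exact h3
  · -- state constraints
    intro k hk1 hk2
    have hk2' : k + 1 ≤ n + 1 := by omega
    rw [hform k hk2']
    have hzk : z (k + 1) ∈ Z (k + 1) := by
      by_cases hcase : k + 1 ≤ n
      · exact hfeas_z (k + 1) (by omega) (by omega)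
      · have : k + 1 = n + 1 := by omega
        rw [this]; exact hZf3 hfeas_f
    exact hZw k hk1 hk2' _ hzk
  · -- terminal constraint
    have hzn : z' n = z (n + 1) + (AK ^ n).mulVec w := hform n le_rfl
    have hstep : z' (n + 1) = AK.mulVec (z (n + 1)) + (AK ^ (n + 1)).mulVec w := by
      rw [hrec, if_neg (by omega), dyn, hzn, Matrix.mulVec_zero, Matrix.mulVec_add,
        Matrix.mulVec_mulVec, ← pow_succ']
      abel
    rw [hstep]
    exact hZf2 (Set.add_mem_add ⟨z (n + 1), hfeas_f, rfl⟩ ⟨w, hw, rfl⟩)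
end

section
/- Nesting of the tightened constraint sets (key containment in the proof of Proposition 3): Let A_K ∈ ℝ^{d×d}, let W ⊆ ℝ^d, and let Γ_1, Γ_2, … ⊆ ℝ^d be arbitrary sets. For k ≥ 1 define Z_k := ∩_{p=1}^k ( Γ_p ⊖ (⊕_{r=p}^{k−1} A_K^r''W) ), where the Minkowski sum over an empty index range is {0}. Then for every k ≥ 1: Z_{k+1} ⊕ A_K^k''W ⊆ Z_k. -/
open Matrix Pointwise

/-- Nesting of the tightened constraint sets (key containment in the proof of
Proposition 3): `Z_{k+1} ⊕ A_K^k W ⊆ Z_k` for every `k ≥ 1`. -/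
theorem tightened_sets_nesting
    (d : ℕ) (AK : Matrix (Fin d) (Fin d) ℝ) (W : Set (Fin d → ℝ))
    (Γ : ℕ → Set (Fin d → ℝ)) (Z : ℕ → Set (Fin d → ℝ))
    (hZ : ∀ k, 1 ≤ k → Z k = ⋂ p ∈ Finset.Icc 1 k,
        pDiff (Γ p) (∑ r ∈ Finset.Ico p k, (AK ^ r).mulVec '' W))
    (k : ℕ) (hk : 1 ≤ k) :
    Z (k + 1) + (AK ^ k).mulVec '' W ⊆ Z k := by
  rintro _ ⟨x, hx, _, ⟨w, hw, rfl⟩, rfl⟩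
  rw [hZ k hk]
  rw [hZ (k + 1) (le_trans hk (Nat.le_succ k))] at hx
  simp only [Set.mem_iInter] at hx ⊢
  intro p hp
  have hp' : p ∈ Finset.Icc 1 (k + 1) := by
    simp only [Finset.mem_Icc] at hp ⊢; omega
  have hx' := hx p hp'
  intro s hs
  have hps : p ≤ k := (Finset.mem_Icc.mp hp).2
  have hsplit : (∑ r ∈ Finset.Ico p (k + 1), (AK ^ r).mulVec '' W)
      = (∑ r ∈ Finset.Ico p k, (AK ^ r).mulVec '' W) + (AK ^ k).mulVec '' W := by
    rw [Finset.sum_Ico_succ_top hps]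
  have hmem : s + (AK ^ k).mulVec w ∈ ∑ r ∈ Finset.Ico p (k + 1), (AK ^ r).mulVec '' W := by
    rw [hsplit]
    exact Set.add_mem_add hs ⟨w, hw, rfl⟩
  have := hx' _ hmem
  have : x + (s + (AK ^ k).mulVec w) = x + (AK ^ k).mulVec w + s := by ring
  rw [← this]
  exact hx' _ hmem
end

section
/- Part 2 of the dual norm lemma (Lemma 1): Let A be a real p×d matrix with full column rank (rank A = d, so AᵀA is invertible). Then for every y ∈ ℝ^d: sup { ⟨x, y⟩ : x ∈ ℝ^d, ‖Ax‖₂ ≤ 1 } = ‖A(AᵀA)⁻¹ y‖₂, where ⟨x, y⟩ is the Euclidean inner product. That is, the dual norm of the norm x ↦ ‖Ax‖₂ is y ↦ ‖A(AᵀA)⁻¹ y‖₂. -/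
open Matrix

lemma e2_eq_sqrt_dot {k : ℕ} (x : Fin k → ℝ) : e2 x = Real.sqrt (x ⬝ᵥ x) := by
  simp [e2, dotProduct, sq]

lemma e2_nonneg {k : ℕ} (x : Fin k → ℝ) : 0 ≤ e2 x := Real.sqrt_nonneg _

lemma dot_self_nonneg {k : ℕ} (x : Fin k → ℝ) : 0 ≤ x ⬝ᵥ x :=
  Finset.sum_nonneg fun i _ => mul_self_nonneg _

lemma sq_e2 {k : ℕ} (x : Fin k → ℝ) : e2 x ^ 2 = x ⬝ᵥ x := by
  rw [e2_eq_sqrt_dot, Real.sq_sqrt (dot_self_nonneg x)]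

lemma cs {k : ℕ} (u v : Fin k → ℝ) : u ⬝ᵥ v ≤ e2 u * e2 v := by
  have h : (u ⬝ᵥ v) ^ 2 ≤ (e2 u * e2 v) ^ 2 := by
    rw [mul_pow, sq_e2, sq_e2]
    simpa [dotProduct, sq] using Finset.sum_mul_sq_le_sq_mul_sq Finset.univ u v
  calc u ⬝ᵥ v ≤ |u ⬝ᵥ v| := le_abs_self _
    _ = Real.sqrt ((u ⬝ᵥ v) ^ 2) := (Real.sqrt_sq_eq_abs _).symm
    _ ≤ Real.sqrt ((e2 u * e2 v) ^ 2) := Real.sqrt_le_sqrt h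
    _ = e2 u * e2 v := Real.sqrt_sq (mul_nonneg (e2_nonneg u) (e2_nonneg v))

lemma e2_smul {k : ℕ} (c : ℝ) (x : Fin k → ℝ) (hc : 0 ≤ c) :
    e2 (c • x) = c * e2 x := by
  simp only [e2, Pi.smul_apply, smul_eq_mul, mul_pow]
  rw [← Finset.mul_sum, Real.sqrt_mul (by positivity), Real.sqrt_sq hc]

/-- Part 2 of the dual norm lemma (Lemma 1): for a full column-rank matrix `A`,
the dual norm of `x ↦ ‖A x‖₂` is `y ↦ ‖A (AᵀA)⁻¹ y‖₂`. -/
theorem dual_norm_of_mulVec_norm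
    (p d : ℕ) (A : Matrix (Fin p) (Fin d) ℝ) (hA : A.rank = d) (y : Fin d → ℝ) :
    sSup {r : ℝ | ∃ x : Fin d → ℝ, e2 (A.mulVec x) ≤ 1 ∧ r = x ⬝ᵥ y} =
      e2 ((A * (Aᵀ * A)⁻¹).mulVec y) := by
  set B := Aᵀ * A with hBdef
  -- B is invertible
  have hrank : B.rank = d := by rw [hBdef, rank_transpose_mul_self, hA]
  have hBunit : IsUnit B := by
    rw [← Matrix.mulVec_surjective_iff_isUnit]
    have : LinearMap.range B.mulVecLin = ⊤ := by
      apply Submodule.eq_top_of_finrank_eq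
      have : B.rank = Module.finrank ℝ (LinearMap.range B.mulVecLin) := rfl
      rw [← this, hrank]
      simp [Module.finrank_pi]
    exact LinearMap.range_eq_top.mp this
  have hBdet : IsUnit B.det := (Matrix.isUnit_iff_isUnit_det B).mp hBunit
  set z := (B⁻¹).mulVec y with hz
  have hAz : (A * B⁻¹).mulVec y = A.mulVec z := by rw [hz, Matrix.mulVec_mulVec]
  have hBz : B.mulVec z = y := by
    rw [hz, Matrix.mulVec_mulVec, Matrix.mul_nonsing_inv _ hBdet, Matrix.one_mulVec]
  -- key identity: (A x) ⬝ᵥ (A z) = x ⬝ᵥ y for all x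
  have key : ∀ x : Fin d → ℝ, (A.mulVec x) ⬝ᵥ (A.mulVec z) = x ⬝ᵥ y := by
    intro x
    rw [← hBz, hBdef, ← Matrix.mulVec_mulVec, Matrix.dotProduct_mulVec (v := x),
      Matrix.vecMul_transpose]
  set c := e2 (A.mulVec z) with hc
  have hub : ∀ r ∈ {r : ℝ | ∃ x : Fin d → ℝ, e2 (A.mulVec x) ≤ 1 ∧ r = x ⬝ᵥ y}, r ≤ c := by
    rintro r ⟨x, hx1, rfl⟩
    calc x ⬝ᵥ y = (A.mulVec x) ⬝ᵥ (A.mulVec z) := (key x).symm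
      _ ≤ e2 (A.mulVec x) * c := cs _ _
      _ ≤ 1 * c := by
          exact mul_le_mul_of_nonneg_right hx1 (e2_nonneg _)
      _ = c := one_mul c
  rw [hAz, ← hc]
  rcases eq_or_lt_of_le (e2_nonneg (A.mulVec z)) with h0 | hpos
  · -- c = 0 : then A z = 0, hence y = 0
    have hAz0 : A.mulVec z = 0 := by
      have : (A.mulVec z) ⬝ᵥ (A.mulVec z) = 0 := by
        rw [← sq_e2, ← h0]; norm_num
      exact dotProduct_self_eq_zero.mp this
    have hy0 : y = 0 := by
      rw [← hBz, hBdef, ← Matrix.mulVec_mulVec, hAz0, Matrix.mulVec_zero]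
    have hset : {r : ℝ | ∃ x : Fin d → ℝ, e2 (A.mulVec x) ≤ 1 ∧ r = x ⬝ᵥ y} = {0} := by
      ext r
      simp only [Set.mem_setOf_eq, Set.mem_singleton_iff, hy0, dotProduct_zero]
      constructor
      · rintro ⟨x, _, rfl⟩; rfl
      · rintro rfl
        exact ⟨0, by simp [e2, Matrix.mulVec_zero], rfl⟩
    rw [hset, csSup_singleton, hc, ← h0]
  · -- c > 0 : c itself is attained
    have hmem : c ∈ {r : ℝ | ∃ x : Fin d → ℝ, e2 (A.mulVec x) ≤ 1 ∧ r = x ⬝ᵥ y} := by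
      have hcpos : 0 < c := hc ▸ hpos
      refine ⟨c⁻¹ • z, ?_, ?_⟩
      · rw [Matrix.mulVec_smul, e2_smul _ _ (inv_nonneg.mpr hcpos.le), ← hc,
          inv_mul_cancel₀ hcpos.ne']
      · rw [smul_dotProduct, smul_eq_mul]
        have hzy : z ⬝ᵥ y = c ^ 2 := by
          rw [hc, sq_e2, key z]
        rw [hzy, sq, ← mul_assoc, inv_mul_cancel₀ hcpos.ne', one_mul]
    exact le_antisymm (csSup_le ⟨c, hmem⟩ hub) (le_csSup ⟨c, hub⟩ hmem)
end
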